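/- For integers A, B, the equation 4A³ + 27B² = 0 holds if and only if there exists an integer n with A = -3n² and B = 2n³. -/
import Mathlib

lemma nat_sq_eq_cube {b c : ℕ} (h : b ^ 2 = c ^ 3) : ∃ n : ℕ, c = n ^ 2 ∧ b = n ^ 3 := by
  rcases eq_or_ne c 0 with rfl | hc
  · exact ⟨0, by simp, by simpa using pow_eq_zero_iff (n := 2) (by norm_num) |>.mp (by simpa using h)⟩
  have hb : b ≠ 0 := by
    intro hb; rw [hb] at h; exact hc (pow_eq_zero_iff (by norm_num) |>.mp h.symm)
  have hdvd : c ∣ b := by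
    rw [← Nat.factorization_le_iff_dvd hc hb]
    intro p
    have := congrArg (fun m => m.factorization p) h
    simp only [Nat.factorization_pow, Finsupp.smul_apply, smul_eq_mul] at this
    omega
  obtain ⟨n, rfl⟩ := hdvd
  have hn : n ^ 2 = c := by
    have h2 : c ^ 2 * n ^ 2 = c ^ 2 * c := by ring_nf; ring_nf at h; linarith [h]
    exact Nat.eq_of_mul_eq_mul_left (by positivity) h2
  exact ⟨n, hn.symm, by rw [← hn]; ring⟩

theorem discriminant_zero_parametrization (A B : ℤ) :
    4 * A ^ 3 + 27 * B ^ 2 = 0 ↔ ∃ n : ℤ, A = -3 * n ^ 2 ∧ B = 2 * n ^ 3 := by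
  constructor
  · intro h
    -- 3 ∣ A
    have h3 : (3 : ℤ) ∣ A := by
      have hp : Prime (3 : ℤ) := Int.prime_three
      have : (3 : ℤ) ∣ 4 * A ^ 3 := ⟨-9 * B ^ 2, by linarith⟩
      rcases hp.dvd_mul.mp this with h4 | hA3
      · norm_num at h4
      · exact hp.dvd_of_dvd_pow hA3
    obtain ⟨a, rfl⟩ := h3
    have h2 : (2 : ℤ) ∣ B := by
      have : (2 : ℤ) ∣ B ^ 2 := ⟨-2 * a ^ 3, by linarith⟩
      exact Int.prime_two.dvd_of_dvd_pow this
    obtain ⟨b, rfl⟩ := h2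
    have key : b ^ 2 = (-a) ^ 3 := by nlinarith
    have hcnn : (0 : ℤ) ≤ -a := by
      by_contra hlt
      push_neg at hlt
      have : (-a) ^ 3 < 0 := Odd.pow_neg (by decide) hlt
      nlinarith [sq_nonneg b]
    obtain ⟨n, hn1, hn2⟩ := nat_sq_eq_cube (b := b.natAbs) (c := (-a).toNat)
      (by
        have : ((b.natAbs : ℤ)) ^ 2 = (((-a).toNat : ℤ)) ^ 3 := by
          rw [← Int.abs_eq_natAbs, sq_abs, Int.toNat_of_nonneg hcnn]
          exact key
        exact_mod_cast this)
    have hc : -a = (n : ℤ) ^ 2 := by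
      have := congrArg (fun m : ℕ => (m : ℤ)) hn1
      push_cast at this
      rwa [Int.toNat_of_nonneg hcnn] at this
    have hbabs : (b.natAbs : ℤ) = (n : ℤ) ^ 3 := by exact_mod_cast hn2
    rcases Int.natAbs_eq b with hb | hb
    · exact ⟨n, by linarith [hc], by rw [hb, hbabs]⟩
    · exact ⟨-n, by rw [show ((-n : ℤ)) ^ 2 = (n : ℤ) ^ 2 by ring]; linarith [hc],
        by rw [hb, hbabs]; ring⟩
  · rintro ⟨n, rfl, rfl⟩
    ring
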